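/- arXiv:0803.2083 — 5 statements merged into one kernel-verified Lean document; each statement's English description precedes it below -/
import Mathlib

section
/- Let n and s be coprime integers with 2 ≤ n < s and set g = (n-1)(s-1)/2. For every integer k with 0 ≤ k ≤ 2g-1, k is representable if and only if 2g-1-k is not representable. Equivalently, the map k ↦ 2g-1-k is a bijection between the representable numbers in {0,1,...,2g-1} and the gaps; in particular, if w_1 < ... < w_g are the gaps and 0 = w_1* < ... < w_g* are the representable numbers in {0,1,...,2g-1}, then 2g-1-w_i* = w_{g+1-i} for all 1 ≤ i ≤ g. -/
/-- A natural number `k` is representable if `k = n*i + s*j` for some naturals `i, j`. -/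
def Representable (n s k : ℕ) : Prop := ∃ i j : ℕ, k = n * i + s * j

lemma rep_iff (n s : ℕ) (hs : 0 < s) (hcop : Nat.Coprime n s)
    (k : ℕ) (i j : ℤ) (hi0 : 0 ≤ i) (his : i < s) (hk : (k:ℤ) = n * i + s * j) :
    Representable n s k ↔ 0 ≤ j := by
  constructor
  · rintro ⟨i', j', h⟩
    have hsd : (s:ℤ) ∣ (i' - i) := by
      have hcop' : IsCoprime (s:ℤ) (n:ℤ) := by
        rw [Int.isCoprime_iff_gcd_eq_one]
        simpa [Int.gcd, Nat.coprime_comm] using hcop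
      have h1 : (s:ℤ) ∣ (n:ℤ) * (i' - i) := by
        refine ⟨j - j', ?_⟩
        have : (k:ℤ) = n * i' + s * j' := by exact_mod_cast h
        linarith [hk, this]
      exact hcop'.dvd_of_dvd_mul_left h1
    obtain ⟨t, ht⟩ := hsd
    have ht0 : 0 ≤ t := by
      have : -(s:ℤ) < s * t := by
        have : (0:ℤ) ≤ i' := Int.natCast_nonneg i'
        nlinarith
      nlinarith
    have hj : j = j' + n * t := by
      have h2 : (k:ℤ) = n * i' + s * j' := by exact_mod_cast h
      have : (n:ℤ) * (s * t) = s * (j - j') := by nlinarith [hk, h2]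
      have hs' : (0:ℤ) < s := by exact_mod_cast hs
      nlinarith
    have : (0:ℤ) ≤ j' := Int.natCast_nonneg j'
    nlinarith [Int.natCast_nonneg n]
  · intro hj
    refine ⟨i.toNat, j.toNat, ?_⟩
    have : (k:ℤ) = n * i.toNat + s * j.toNat := by
      rwa [Int.toNat_of_nonneg hi0, Int.toNat_of_nonneg hj]
    exact_mod_cast this

lemma exists_rep (n s : ℕ) (hs : 0 < s) (hcop : Nat.Coprime n s) (k : ℕ) :
    ∃ i j : ℤ, 0 ≤ i ∧ i < s ∧ (k:ℤ) = n * i + s * j := by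
  obtain ⟨a, b, hab⟩ := (Nat.isCoprime_iff_coprime (m := n) (n := s)).mpr hcop
  have hs' : (0:ℤ) < s := by exact_mod_cast hs
  refine ⟨(k * a) % s, k * b + n * ((k * a) / s), Int.emod_nonneg _ (ne_of_gt hs'),
    Int.emod_lt_of_pos _ hs', ?_⟩
  have hdm := Int.mul_ediv_add_emod (k * a) s
  linear_combination -(k:ℤ) * hab - (n:ℤ) * hdm

lemma strictMono_eq_of_range_eq {m : ℕ} {f h : Fin m → ℕ} (hf : StrictMono f)
    (hh : StrictMono h) (hr : Set.range f = Set.range h) : f = h := by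
  classical
  set t : Finset ℕ := Finset.image f Finset.univ with ht
  have hc : t.card = m := by
    rw [ht, Finset.card_image_of_injective _ hf.injective, Finset.card_univ, Fintype.card_fin]
  have h1 : f = t.orderEmbOfFin hc :=
    Finset.orderEmbOfFin_unique hc (fun x => Finset.mem_image_of_mem _ (Finset.mem_univ x)) hf
  have h2 : h = t.orderEmbOfFin hc := by
    refine Finset.orderEmbOfFin_unique hc (fun x => ?_) hh
    have : h x ∈ Set.range f := by rw [hr]; exact ⟨x, rfl⟩
    obtain ⟨y, hy⟩ := this
    rw [← hy]
    exact Finset.mem_image_of_mem _ (Finset.mem_univ y)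
  rw [h1, h2]

theorem gap_symmetry (n s g : ℕ) (hn : 2 ≤ n) (hns : n < s)
    (hcop : Nat.Coprime n s) (hg : 2 * g = (n - 1) * (s - 1)) :
    (∀ k : ℕ, k ≤ 2 * g - 1 →
      (Representable n s k ↔ ¬ Representable n s (2 * g - 1 - k))) ∧
    (∀ w wstar : Fin g → ℕ, StrictMono w → StrictMono wstar →
      Set.range w = {k : ℕ | ¬ Representable n s k} →
      Set.range wstar = {k : ℕ | k ≤ 2 * g - 1 ∧ Representable n s k} →
      ∀ i : Fin g, 2 * g - 1 - wstar i = w i.rev) := by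
  have hs : 0 < s := by omega
  have hs' : (0:ℤ) < s := by exact_mod_cast hs
  have hn' : (2:ℤ) ≤ n := by exact_mod_cast hn
  have hns' : (n:ℤ) < s := by exact_mod_cast hns
  have hgZ : (2 * g : ℤ) = ((n:ℤ) - 1) * ((s:ℤ) - 1) := by
    have h1 : ((n - 1 : ℕ) : ℤ) = (n:ℤ) - 1 := by
      rw [Nat.cast_sub (by omega)]; norm_num
    have h2 : ((s - 1 : ℕ) : ℤ) = (s:ℤ) - 1 := by
      rw [Nat.cast_sub (by omega)]; norm_num
    rw [← h1, ← h2]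
    exact_mod_cast hg
  have hgpos : 1 ≤ g := by
    have : 0 < (n - 1) * (s - 1) := Nat.mul_pos (by omega) (by omega)
    omega
  have hF : ((2 * g - 1 : ℕ) : ℤ) = (n:ℤ) * s - n - s := by
    rw [Nat.cast_sub (by omega)]
    push_cast
    nlinarith [hgZ]
  have part1 : ∀ k : ℕ, k ≤ 2 * g - 1 →
      (Representable n s k ↔ ¬ Representable n s (2 * g - 1 - k)) := by
    intro k hk
    obtain ⟨i, j, hi0, his, hkij⟩ := exists_rep n s hs hcop k
    have hA := rep_iff n s hs hcop k i j hi0 his hkij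
    have hm : ((2 * g - 1 - k : ℕ) : ℤ) = n * ((s:ℤ) - 1 - i) + s * (-1 - j) := by
      rw [Nat.cast_sub hk, hF, hkij]; ring
    have hB := rep_iff n s hs hcop (2 * g - 1 - k) ((s:ℤ) - 1 - i) (-1 - j)
      (by linarith) (by linarith) hm
    rw [hA, hB]; omega
  refine ⟨part1, ?_⟩
  intro w wstar hw hwstar hrw hrws
  have hub : ∀ k, ¬ Representable n s k → k ≤ 2 * g - 1 := by
    intro k hk
    by_contra hcon
    push_neg at hcon
    obtain ⟨i, j, hi0, his, hkij⟩ := exists_rep n s hs hcop k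
    apply hk
    rw [rep_iff n s hs hcop k i j hi0 his hkij]
    have h2g : ((2 * g - 1 : ℕ) : ℤ) < k := by exact_mod_cast hcon
    rw [hF] at h2g
    have hni : (n:ℤ) * i ≤ n * ((s:ℤ) - 1) :=
      mul_le_mul_of_nonneg_left (by linarith) (by linarith)
    have h1 : 1 - (s:ℤ) ≤ s * j := by nlinarith
    by_contra hj
    push_neg at hj
    have : (s:ℤ) * j ≤ s * (-1) := mul_le_mul_of_nonneg_left (by omega) (by linarith)
    linarith
  have hws_mem : ∀ i : Fin g, wstar i ≤ 2 * g - 1 ∧ Representable n s (wstar i) := by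
    intro i
    have : wstar i ∈ Set.range wstar := ⟨i, rfl⟩
    rw [hrws] at this
    exact this
  set u : Fin g → ℕ := fun i => 2 * g - 1 - wstar i.rev with hu
  have hum : StrictMono u := by
    intro a b hab
    have h1 : b.rev < a.rev := Fin.rev_lt_rev.mpr hab
    have h2 := hwstar h1
    have := (hws_mem a.rev).1
    have := (hws_mem b.rev).1
    simp only [hu]
    omega
  have hur : Set.range u = Set.range w := by
    rw [hrw]
    ext m
    constructor
    · rintro ⟨i, rfl⟩
      exact (part1 _ (hws_mem i.rev).1).mp (hws_mem i.rev).2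
    · intro hm
      have hmle : m ≤ 2 * g - 1 := hub m hm
      have hrepm' : Representable n s (2 * g - 1 - m) := by
        by_contra hc
        have := (part1 (2 * g - 1 - m) (by omega)).mpr
        rw [show 2 * g - 1 - (2 * g - 1 - m) = m by omega] at this
        exact hc (this hm)
      have : (2 * g - 1 - m) ∈ Set.range wstar := by
        rw [hrws]; exact ⟨by omega, hrepm'⟩
      obtain ⟨t, ht⟩ := this
      refine ⟨t.rev, ?_⟩
      simp only [hu, Fin.rev_rev, ht]
      omega
  have := strictMono_eq_of_range_eq hum hw hur
  intro i
  have h := congrFun this i.rev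
  simpa [hu, Fin.rev_rev] using h
end

section
/- Let n and s be coprime integers with 2 ≤ n < s and set g = (n-1)(s-1)/2. For every integer N ≥ g, the number of representable integers k with 0 ≤ k ≤ N+g-1 is exactly N. (This is the combinatorial form of the Riemann–Roch statement dim L((N+g-1)∞) = N for N ≥ g.) -/
theorem riemann_roch_count (n s g : ℕ) (hn : 2 ≤ n) (hns : n < s)
    (hcop : Nat.Coprime n s) (hg : 2 * g = (n - 1) * (s - 1))
    (N : ℕ) (hN : g ≤ N) :
    {k : ℕ | k ≤ N + g - 1 ∧ Representable n s k}.ncard = N := by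
  have hn0 : 0 < n := by omega
  -- basic product identity
  have h2g : 2 * g + n + s = n * s + 1 := by
    obtain ⟨n', rfl⟩ : ∃ n', n = n' + 1 := ⟨n - 1, by omega⟩
    obtain ⟨s', rfl⟩ : ∃ s', s = s' + 1 := ⟨s - 1, by omega⟩
    simp only [Nat.add_sub_cancel] at hg
    have h1 : (n' + 1) * (s' + 1) + 1 = n' * s' + n' + s' + 2 := by ring
    linarith [hg, h1]
  have hg1 : 1 ≤ g := by
    have h2 : 1 * 2 ≤ (n - 1) * (s - 1) :=
      Nat.mul_le_mul (by omega) (by omega)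
    rw [← hg] at h2
    omega
  set M := N + g - 1 with hMdef
  have hM1 : M + 1 = N + g := by omega
  have hsn : s * n = n * s := Nat.mul_comm s n
  have hjb : ∀ j, j < n → s * j ≤ M + n := by
    intro j hj
    have h1 : s * (j + 1) ≤ s * n := Nat.mul_le_mul_left s (by omega)
    rw [Nat.mul_succ] at h1
    linarith [h1, h2g, hM1, hN, hsn]
  set cnt : ℕ → ℕ := fun j => (M + n - s * j) / n with hcnt_def
  have key : ∀ X Y : ℕ, X ≤ M + n → (Y + n ≤ M + n - X ↔ X + Y ≤ M) := by
    intro X Y h; omega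
  have hcnt : ∀ j, j < n → ∀ i : ℕ, (i < cnt j ↔ s * j + n * i ≤ M) := by
    intro j hj i
    have h := Nat.le_div_iff_mul_le (k := n) hn0 (x := i + 1) (y := M + n - s * j)
    have h2 : (i + 1) * n = n * i + n := by ring
    rw [h2] at h
    constructor
    · intro hi
      exact (key (s * j) (n * i) (hjb j hj)).mp (h.mp hi)
    · intro hi
      exact h.mpr ((key (s * j) (n * i) (hjb j hj)).mpr hi)
  set F : Finset ℕ :=
    (Finset.range n).biUnion
      (fun j => (Finset.range (cnt j)).image (fun i => s * j + n * i)) with hF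
  -- the set equals F
  have hset : {k : ℕ | k ≤ M ∧ Representable n s k} = ↑F := by
    ext k
    simp only [Set.mem_setOf_eq, Finset.mem_coe, hF, Finset.mem_biUnion, Finset.mem_image,
      Finset.mem_range]
    constructor
    · rintro ⟨hkM, i, j, rfl⟩
      have hdm : n * (j / n) + j % n = j := Nat.div_add_mod j n
      have heq : n * i + s * j = s * (j % n) + n * (i + s * (j / n)) := by
        calc n * i + s * j = n * i + s * (n * (j / n) + j % n) := by rw [hdm]
          _ = s * (j % n) + n * (i + s * (j / n)) := by ring
      refine ⟨j % n, Nat.mod_lt j hn0, i + s * (j / n), ?_, heq.symm⟩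
      rw [hcnt (j % n) (Nat.mod_lt j hn0), ← heq]
      exact hkM
    · rintro ⟨j, hj, i, hi, rfl⟩
      exact ⟨(hcnt j hj i).mp hi, i, j, by ring⟩
  -- injectivity of j across classes
  have hinj : ∀ j1, j1 < n → ∀ j2, j2 < n → ∀ i1 i2 : ℕ,
      s * j1 + n * i1 = s * j2 + n * i2 → j1 = j2 := by
    intro j1 h1 j2 h2 i1 i2 h
    have e1 : (s * j1 + n * i1) % n = (s * j1) % n := Nat.add_mul_mod_self_left _ _ _
    have e2 : (s * j2 + n * i2) % n = (s * j2) % n := Nat.add_mul_mod_self_left _ _ _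
    have hm : s * j1 ≡ s * j2 [MOD n] := by
      unfold Nat.ModEq
      rw [← e1, ← e2, h]
    have hj := Nat.ModEq.cancel_left_of_coprime hcop hm
    unfold Nat.ModEq at hj
    rwa [Nat.mod_eq_of_lt h1, Nat.mod_eq_of_lt h2] at hj
  have hcard : F.card = ∑ j ∈ Finset.range n, cnt j := by
    rw [hF, Finset.card_biUnion]
    · refine Finset.sum_congr rfl fun j hj => ?_
      rw [Finset.card_image_of_injective _ ?_, Finset.card_range]
      intro a b hab
      have := Nat.add_left_cancel hab
      exact Nat.eq_of_mul_eq_mul_left hn0 this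
    · intro j1 h1 j2 h2 hne
      simp only [Finset.disjoint_left, Finset.mem_image, Finset.mem_range]
      rintro a ⟨i1, hi1, rfl⟩ ⟨i2, hi2, heq⟩
      exact hne (hinj j1 (Finset.mem_range.mp h1) j2 (Finset.mem_range.mp h2) i1 i2 heq.symm)
  -- the mod-sum bijection
  set σ : ℕ → ℕ := fun j => (M + n - s * j) % n with hσ
  have hσinj : ∀ j1 ∈ Finset.range n, ∀ j2 ∈ Finset.range n, σ j1 = σ j2 → j1 = j2 := by
    intro j1 h1 j2 h2 h
    rw [Finset.mem_range] at h1 h2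
    have b1 := hjb j1 h1
    have b2 := hjb j2 h2
    have e1 : (M + n - s * j1) + s * j1 = M + n := Nat.sub_add_cancel b1
    have e2 : (M + n - s * j2) + s * j2 = M + n := Nat.sub_add_cancel b2
    have h' : (M + n - s * j1) ≡ (M + n - s * j2) [MOD n] := h
    have hsum : (M + n - s * j1) + s * j1 ≡ (M + n - s * j2) + s * j2 [MOD n] := by
      rw [e1, e2]
    have hm : s * j1 ≡ s * j2 [MOD n] := Nat.ModEq.add_left_cancel h' hsum
    have hj := Nat.ModEq.cancel_left_of_coprime hcop hm
    unfold Nat.ModEq at hj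
    rwa [Nat.mod_eq_of_lt h1, Nat.mod_eq_of_lt h2] at hj
  have himg : (Finset.range n).image σ = Finset.range n := by
    apply Finset.eq_of_subset_of_card_le
    · intro r hr
      rw [Finset.mem_image] at hr
      obtain ⟨j, hj, rfl⟩ := hr
      exact Finset.mem_range.mpr (Nat.mod_lt _ hn0)
    · rw [Finset.card_image_of_injOn (fun x hx y hy h => hσinj x hx y hy h)]
  have hmodsum : ∑ j ∈ Finset.range n, σ j = ∑ j ∈ Finset.range n, j := by
    have h := Finset.sum_image (g := σ) (s := Finset.range n) (f := fun r => r)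
      (fun x hx y hy h => hσinj x hx y hy h)
    rw [himg] at h
    exact h.symm
  -- main sum identity
  set T := ∑ j ∈ Finset.range n, cnt j with hT
  set R := ∑ j ∈ Finset.range n, j with hR
  have E : n * T + R + s * R = n * (M + n) := by
    have hpt : ∀ j ∈ Finset.range n, n * cnt j + σ j + s * j = M + n := by
      intro j hj
      rw [Finset.mem_range] at hj
      have hd : n * ((M + n - s * j) / n) + (M + n - s * j) % n = M + n - s * j :=
        Nat.div_add_mod _ _
      have := Nat.sub_add_cancel (hjb j hj)
      simp only [hcnt_def, hσ]
      omega
    have hsum2 : ∑ j ∈ Finset.range n, (n * cnt j + σ j + s * j)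
        = ∑ j ∈ Finset.range n, (M + n) := Finset.sum_congr rfl hpt
    rw [Finset.sum_const, Finset.card_range, smul_eq_mul] at hsum2
    rw [Finset.sum_add_distrib, Finset.sum_add_distrib, ← Finset.mul_sum, ← Finset.mul_sum,
      hmodsum] at hsum2
    exact hsum2
  have E2 : R * 2 + n = n * n := by
    have h1 := Finset.sum_range_id_mul_two n
    have h2 : n * (n - 1) + n = n * n := by
      have h3 : n - 1 + 1 = n := by omega
      calc n * (n - 1) + n = n * ((n - 1) + 1) := by ring
        _ = n * n := by rw [h3]
    omega
  have hZ : 2 * ((n : ℤ) * T) = 2 * ((n : ℤ) * N) := by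
    have e1 : (n : ℤ) * T + R + s * R = n * (M + n) := by exact_mod_cast E
    have e2 : (R : ℤ) * 2 + n = n * n := by exact_mod_cast E2
    have e3 : 2 * (g : ℤ) + n + s = n * s + 1 := by exact_mod_cast h2g
    have e4 : (M : ℤ) + 1 = N + g := by exact_mod_cast hM1
    linear_combination 2 * e1 - (1 + (s : ℤ)) * e2 + (n : ℤ) * e3 + 2 * (n : ℤ) * e4
  have hTN : T = N := by
    have h2 : 2 * (n * T) = 2 * (n * N) := by exact_mod_cast hZ
    have h3 : (2 * n) * T = (2 * n) * N := by
      rw [Nat.mul_assoc, Nat.mul_assoc]; exact h2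
    exact Nat.eq_of_mul_eq_mul_left (by omega) h3
  rw [hset, Set.ncard_coe_finset, hcard]
  exact hTN
end

section
/- Let n and s be coprime integers with 2 ≤ n < s, g = (n-1)(s-1)/2, and let w_1 < ... < w_g be the gaps of the numerical semigroup generated by n and s. Then |λ(n,s)| = ∑_{i=1}^{g} (w_{g+1-i} - (g-i)) = (n²-1)(s²-1)/24. Equivalently, the sum of the gaps satisfies ∑_{i=1}^{g} w_i = (n²-1)(s²-1)/24 + g(g-1)/2. -/
private lemma wl_sum_id (n : ℕ) : 2 * ∑ j ∈ Finset.range n, (j:ℤ) = n*(n-1) := by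
  induction n with
  | zero => simp
  | succ m ih => rw [Finset.sum_range_succ]; push_cast; push_cast at ih; linarith

private lemma wl_sum_sq (n : ℕ) : 6 * ∑ j ∈ Finset.range n, (j:ℤ)^2 = n*(n-1)*(2*n-1) := by
  induction n with
  | zero => simp
  | succ m ih => rw [Finset.sum_range_succ]; push_cast; push_cast at ih; linarith

private lemma wl_inner_sum (a b : ℤ) (m : ℕ) :
    2 * ∑ t ∈ Finset.Ico 1 (m+1), (a - b*t) = 2*m*a - b*m*(m+1) := by
  induction m with
  | zero => simp
  | succ m ih =>
    rw [Finset.sum_Ico_succ_top (by omega)]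
    push_cast; push_cast at ih; linarith

private lemma wl_perm_sum (n s : ℕ) (hn : 0 < n) (hcop : Nat.Coprime n s) (f : ℕ → ℤ) :
    ∑ j ∈ Finset.range n, f (s*j % n) = ∑ j ∈ Finset.range n, f j := by
  have hinj : ∀ a ∈ Finset.range n, ∀ b ∈ Finset.range n, s*a % n = s*b % n → a = b := by
    intro a ha b hb h
    simp only [Finset.mem_range] at ha hb
    have : a ≡ b [MOD n] := (Nat.ModEq.cancel_left_of_coprime
      (by simpa [Nat.coprime_comm] using hcop) (by simpa [Nat.ModEq] using h))
    exact this.eq_of_lt_of_lt ha hb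
  have himg : (Finset.range n).image (fun j => s*j % n) = Finset.range n := by
    apply Finset.eq_of_subset_of_card_le
    · intro x hx
      simp only [Finset.mem_image] at hx
      obtain ⟨j, hj, rfl⟩ := hx
      exact Finset.mem_range.2 (Nat.mod_lt _ hn)
    · rw [Finset.card_image_of_injOn (fun a ha b hb => hinj a ha b hb)]
  conv_rhs => rw [← himg]
  rw [Finset.sum_image (fun a ha b hb => hinj a ha b hb)]

theorem weight_lambda_ns (n s g : ℕ) (hn : 2 ≤ n) (hns : n < s)
    (hcop : Nat.Coprime n s) (hg : 2 * g = (n - 1) * (s - 1))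
    (w : Fin g → ℕ) (hw : StrictMono w)
    (hwr : Set.range w = {k : ℕ | ¬ Representable n s k}) :
    (24 : ℤ) * (∑ i : Fin g, ((w i : ℤ) - ((i : ℕ) : ℤ)))
        = ((n : ℤ) ^ 2 - 1) * ((s : ℤ) ^ 2 - 1) ∧
    (24 : ℤ) * (∑ i : Fin g, (w i : ℤ))
        = ((n : ℤ) ^ 2 - 1) * ((s : ℤ) ^ 2 - 1) + 12 * (g : ℤ) * ((g : ℤ) - 1) := by
  haveI : NeZero n := ⟨by omega⟩
  have hn0 : 0 < n := by omega
  have hsu : IsUnit ((s : ZMod n)) :=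
    ⟨ZMod.unitOfCoprime s hcop.symm, ZMod.coe_unitOfCoprime s hcop.symm⟩
  set J : ℕ → ℕ := fun k => ((k : ZMod n) * (s : ZMod n)⁻¹).val with hJdef
  have hJlt : ∀ k, J k < n := fun k => ZMod.val_lt _
  have hJcast : ∀ k : ℕ, ((s * J k : ℕ) : ZMod n) = (k : ZMod n) := by
    intro k
    push_cast
    rw [ZMod.natCast_zmod_val, mul_comm ((s : ZMod n)), mul_assoc,
      ZMod.inv_mul_of_unit _ hsu, mul_one]
  have hJeq : ∀ a b : ℕ, (a : ZMod n) = (b : ZMod n) → J a = J b := by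
    intro a b h; simp only [hJdef, h]
  have hJs : ∀ j : ℕ, J (s * j) = j % n := by
    intro j
    simp only [hJdef]
    push_cast
    rw [mul_comm ((s : ZMod n)), mul_assoc, ZMod.mul_inv_of_unit _ hsu, mul_one,
      ZMod.val_natCast]
  have hdvd1 : ∀ k, s * J k ≤ k → n ∣ (k - s * J k) := by
    intro k h
    rw [← ZMod.natCast_eq_zero_iff, Nat.cast_sub h, hJcast, sub_self]
  have hdvd2 : ∀ k, k ≤ s * J k → n ∣ (s * J k - k) := by
    intro k h
    rw [← ZMod.natCast_eq_zero_iff, Nat.cast_sub h, hJcast, sub_self]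
  have hrep : ∀ k, Representable n s k ↔ s * J k ≤ k := by
    intro k
    constructor
    · rintro ⟨i, j, rfl⟩
      have h1 : J (n*i + s*j) = j % n := by
        rw [hJeq (n*i + s*j) (s*j) (by push_cast; simp), hJs]
      rw [h1]
      have : j % n ≤ j := Nat.mod_le _ _
      nlinarith
    · intro h
      obtain ⟨a, ha⟩ := hdvd1 k h
      exact ⟨a, J k, by omega⟩
  -- facts about gaps
  have gapFacts : ∀ k, ¬ Representable n s k →
      ∃ t, s * J k = k + n * t ∧ 1 ≤ t ∧ t ≤ s * J k / n ∧ (s * J k - k) / n = t := by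
    intro k hk
    rw [hrep] at hk
    push_neg at hk
    obtain ⟨t, ht⟩ := hdvd2 k hk.le
    have ht' : s * J k = k + n * t := by omega
    refine ⟨t, ht', ?_, ?_, ?_⟩
    · rcases Nat.eq_zero_or_pos t with h | h
      · subst h; omega
      · exact h
    · exact (Nat.le_div_iff_mul_le hn0).2 (by rw [mul_comm]; omega)
    · rw [ht, Nat.mul_div_cancel_left _ hn0]
  have hwinj : Function.Injective w := hw.injective
  have hGmem : ∀ k, k ∈ Finset.image w Finset.univ ↔ ¬ Representable n s k := by
    intro k
    simp only [Finset.mem_image, Finset.mem_univ, true_and]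
    constructor
    · rintro ⟨i, rfl⟩
      have : w i ∈ Set.range w := ⟨i, rfl⟩
      rw [hwr] at this; exact this
    · intro h
      have : k ∈ Set.range w := by rw [hwr]; exact h
      exact this
  have hA : ∑ i : Fin g, (w i : ℤ) = ∑ k ∈ Finset.image w Finset.univ, (k : ℤ) :=
    (Finset.sum_image (fun a _ b _ h => hwinj h)).symm
  -- facts about parameters (j, t)
  have parFacts : ∀ j t : ℕ, j < n → 1 ≤ t → t ≤ s * j / n →
      n * t ≤ s * j ∧ J (s * j - n * t) = j ∧ ¬ Representable n s (s * j - n * t) := by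
    intro j t hj ht1 ht2
    have hnt : n * t ≤ s * j := by
      calc n * t = t * n := mul_comm _ _
        _ ≤ (s * j / n) * n := Nat.mul_le_mul_right n ht2
        _ ≤ s * j := Nat.div_mul_le_self _ _
    have hJk : J (s * j - n * t) = j := by
      rw [hJeq (s * j - n * t) (s * j) (by rw [Nat.cast_sub hnt]; push_cast; simp),
        hJs, Nat.mod_eq_of_lt hj]
    refine ⟨hnt, hJk, ?_⟩
    rw [hrep, hJk]
    have : 1 ≤ n * t := by
      calc 1 ≤ n := hn0
        _ = n * 1 := (mul_one n).symm
        _ ≤ n * t := Nat.mul_le_mul_left n ht1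
    omega
  -- bijection with the parametrized gap set
  have hGT : ∑ k ∈ Finset.image w Finset.univ, (k:ℤ)
      = ∑ x ∈ (Finset.range n).sigma (fun j => Finset.Ico 1 (s*j/n + 1)),
          ((s : ℤ) * x.1 - (n : ℤ) * x.2) := by
    apply Finset.sum_nbij' (i := fun k => (⟨J k, (s * J k - k)/n⟩ : Σ _ : ℕ, ℕ))
      (j := fun x => s * x.1 - n * x.2)
    · intro k hk
      rw [hGmem] at hk
      obtain ⟨t, ht', ht1, ht2, htd⟩ := gapFacts k hk
      have hmem : (s * J k - k)/n ∈ Finset.Ico 1 (s * (J k) / n + 1) :=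
        Finset.mem_Ico.2 (by rw [htd]; omega)
      exact Finset.mem_sigma.2 ⟨Finset.mem_range.2 (hJlt k), hmem⟩
    · intro x hx
      rw [Finset.mem_sigma, Finset.mem_range, Finset.mem_Ico] at hx
      obtain ⟨hnt, hJk, hnr⟩ := parFacts x.1 x.2 hx.1 hx.2.1 (by omega)
      rw [hGmem]
      exact hnr
    · intro k hk
      rw [hGmem] at hk
      obtain ⟨t, ht', ht1, ht2, htd⟩ := gapFacts k hk
      simp only [htd]
      omega
    · intro x hx
      rw [Finset.mem_sigma, Finset.mem_range, Finset.mem_Ico] at hx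
      obtain ⟨j, t⟩ := x
      simp only at hx
      obtain ⟨hnt, hJk, hnr⟩ := parFacts j t hx.1 hx.2.1 (by omega)
      simp only
      have h1 : s * J (s * j - n * t) - (s * j - n * t) = n * t := by rw [hJk]; omega
      rw [Sigma.mk.inj_iff]
      refine ⟨hJk, ?_⟩
      rw [heq_eq_eq, h1, Nat.mul_div_cancel_left _ hn0]
    · intro k hk
      rw [hGmem] at hk
      obtain ⟨t, ht', ht1, ht2, htd⟩ := gapFacts k hk
      simp only [htd]
      have := congrArg (Nat.cast : ℕ → ℤ) ht'
      push_cast at this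
      linarith
  rw [Finset.sum_sigma] at hGT
  -- per-term evaluation of inner sums
  have h2 : ∀ j ∈ Finset.range n,
      (n:ℤ) * (2 * ∑ t ∈ Finset.Ico 1 (s*j/n + 1), ((s:ℤ)*j - (n:ℤ)*t))
        = ((s:ℤ)*j)^2 - (((s*j) % n : ℕ):ℤ)^2 - (n:ℤ)*((s:ℤ)*j)
            + (n:ℤ)*(((s*j) % n : ℕ):ℤ) := by
    intro j _
    rw [wl_inner_sum]
    have hmr : (n:ℤ) * ((s*j/n : ℕ):ℤ) + (((s*j) % n : ℕ):ℤ) = (s:ℤ)*j := by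
      exact_mod_cast congrArg (Nat.cast : ℕ → ℤ) (Nat.div_add_mod (s*j) n)
    linear_combination ((s:ℤ)*j + (((s*j) % n : ℕ):ℤ) - (n:ℤ)*((s*j/n : ℕ):ℤ) - n) * hmr
  -- assemble the main sum identity
  have hsum : (n:ℤ) * (2 * ∑ i : Fin g, (w i : ℤ))
      = ∑ j ∈ Finset.range n, (((s:ℤ)*j)^2 - (((s*j) % n : ℕ):ℤ)^2
          - (n:ℤ)*((s:ℤ)*j) + (n:ℤ)*(((s*j) % n : ℕ):ℤ)) := by
    rw [hA, hGT, Finset.mul_sum, Finset.mul_sum]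
    exact Finset.sum_congr rfl h2
  -- split and evaluate
  have hsplit : ∑ j ∈ Finset.range n, (((s:ℤ)*j)^2 - (((s*j) % n : ℕ):ℤ)^2
          - (n:ℤ)*((s:ℤ)*j) + (n:ℤ)*(((s*j) % n : ℕ):ℤ))
      = (s:ℤ)^2 * (∑ j ∈ Finset.range n, (j:ℤ)^2)
        - (∑ j ∈ Finset.range n, ((((s*j) % n : ℕ)):ℤ)^2)
        - (n:ℤ)*(s:ℤ) * (∑ j ∈ Finset.range n, (j:ℤ))
        + (n:ℤ) * (∑ j ∈ Finset.range n, ((((s*j) % n : ℕ)):ℤ)) := by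
    rw [Finset.sum_add_distrib, Finset.sum_sub_distrib, Finset.sum_sub_distrib,
      Finset.mul_sum, Finset.mul_sum, Finset.mul_sum]
    congr 1
    congr 1
    congr 1
    · exact Finset.sum_congr rfl (fun j _ => by ring)
    · exact Finset.sum_congr rfl (fun j _ => by ring)
  have hp1 := wl_perm_sum n s hn0 hcop (fun x => (x:ℤ))
  have hp2 := wl_perm_sum n s hn0 hcop (fun x => (x:ℤ)^2)
  have hQ1 := wl_sum_id n
  have hQ2 := wl_sum_sq n
  have hne : (n:ℤ) ≠ 0 := Int.natCast_ne_zero.2 (by omega)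
  have h24 : (24:ℤ) * ∑ i : Fin g, (w i : ℤ)
      = 2*((s:ℤ)^2-1)*((n:ℤ)-1)*(2*(n:ℤ)-1) - 6*(n:ℤ)*((s:ℤ)-1)*((n:ℤ)-1) := by
    apply mul_left_cancel₀ hne
    rw [hsplit] at hsum
    rw [hp1, hp2] at hsum
    linear_combination 12*hsum + 2*((s:ℤ)^2-1)*hQ2 - 6*(n:ℤ)*((s:ℤ)-1)*hQ1
  have hgZ : 2*(g:ℤ) = ((n:ℤ)-1)*((s:ℤ)-1) := by
    have h1 : 1 ≤ n := by omega
    have h2 : 1 ≤ s := by omega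
    zify [h1, h2] at hg
    exact hg
  have hsecond : (24 : ℤ) * (∑ i : Fin g, (w i : ℤ))
      = ((n : ℤ) ^ 2 - 1) * ((s : ℤ) ^ 2 - 1) + 12 * (g : ℤ) * ((g : ℤ) - 1) := by
    linear_combination h24 - (3*(((n:ℤ)-1)*((s:ℤ)-1)+2*(g:ℤ)) - 6) * hgZ
  refine ⟨?_, hsecond⟩
  have hI : ∑ i : Fin g, ((i:ℕ):ℤ) = ∑ i ∈ Finset.range g, (i:ℤ) :=
    Fin.sum_univ_eq_sum_range _ g
  have hIg := wl_sum_id g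
  rw [Finset.sum_sub_distrib, hI]
  linear_combination hsecond - 12 * hIg
end

section
/- Let n and s be coprime integers with 2 ≤ n < s, g = (n-1)(s-1)/2, and let w_1 < ... < w_g be the gaps of the numerical semigroup generated by n and s. Then the Schur function S_{λ(n,s)}(T), a priori a polynomial in T_1, T_2, T_3, ..., involves only the variables T_{w_1}, ..., T_{w_g}; i.e. every variable T_m actually occurring in S_{λ(n,s)} has index m equal to one of the gaps w_1, ..., w_g. -/
open MvPolynomial

/-- The polynomials `p_m` defined by `p_0 = 1` and
`m * p_m = ∑_{i=1}^m i * T_i * p_{m-i}`; the variable `X i` is `T_i`. -/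
noncomputable def pElem : ℕ → MvPolynomial ℕ ℚ
  | 0 => 1
  | (m + 1) =>
      (((m : ℚ) + 1)⁻¹) •
        ∑ i ∈ Finset.range (m + 1),
          (((i : ℚ) + 1) • (MvPolynomial.X (i + 1) * pElem (m - i)))
  decreasing_by exact Nat.lt_succ_of_le (Nat.sub_le m i)

/-- `p_k` for integer `k`, with `p_k = 0` for `k < 0`. -/
noncomputable def pZ (k : ℤ) : MvPolynomial ℕ ℚ :=
  if k < 0 then 0 else pElem k.toNat

/-- The Schur function `S_λ = det (p_{λ_i - i + j})_{1 ≤ i,j ≤ l}`. -/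
noncomputable def schur (l : ℕ) (lam : Fin l → ℕ) : MvPolynomial ℕ ℚ :=
  Matrix.det (Matrix.of fun i j : Fin l =>
    pZ ((lam i : ℤ) - ((i : ℕ) : ℤ) + ((j : ℕ) : ℤ)))

/-! For `m ≥ 1` one has `∂p_k/∂T_m = p_{k-m}`, while `∂/∂T_0` kills every `p_k`. Differentiating
the Schur determinant row by row therefore lowers the β-number `λ_r + (l - 1 - r)` of one row by
`m`. For `λ(n,s)` the β-numbers are exactly the gaps, and if `m` is representable then a gap minus
`m` is either negative (the row vanishes) or again a gap (the row repeats another row). So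
`∂S/∂T_m = 0` for every representable `m`, and a variable occurring in `S` must be a gap. -/

namespace Derivation

variable {R A M : Type*} [CommSemiring R] [CommSemiring A] [AddCommMonoid M] [Algebra R A]
  [Module A M] [Module R M] (D : Derivation R A M)

theorem leibniz_finset_prod {ι : Type*} [DecidableEq ι] (s : Finset ι) (f : ι → A) :
    D (∏ i ∈ s, f i) = ∑ i ∈ s, (∏ j ∈ s.erase i, f j) • D (f i) := by
  induction s using Finset.induction_on with
  | empty => simp
  | insert a s ha ih =>
    rw [Finset.prod_insert ha, leibniz, ih, Finset.sum_insert ha, Finset.erase_insert ha,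
      Finset.smul_sum, add_comm]
    congr 1
    refine Finset.sum_congr rfl fun i hi => ?_
    rw [Finset.erase_insert_of_ne (ne_of_mem_of_not_mem hi ha).symm,
      Finset.prod_insert fun h => ha (Finset.mem_of_mem_erase h), mul_smul]

section Det

variable {R S : Type*} [CommRing R] [CommRing S] [Algebra R S] (D : Derivation R S S)
  {n : Type*} [Fintype n] [DecidableEq n]

theorem map_det (A : Matrix n n S) :
    D A.det = ∑ r, (A.updateRow r fun j => D (A r j)).det := by
  simp only [Matrix.det_apply, map_sum]
  rw [Finset.sum_comm]
  refine Finset.sum_congr rfl fun σ _ => ?_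
  rw [Units.smul_def, map_zsmul, leibniz_finset_prod, ← Finset.smul_sum]
  congr 1
  conv_rhs => rw [← Equiv.sum_comp σ]
  refine Finset.sum_congr rfl fun i _ => ?_
  rw [← Finset.mul_prod_erase _ _ (Finset.mem_univ i), Matrix.updateRow_self, smul_eq_mul,
    mul_comm]
  congr 1
  refine Finset.prod_congr rfl fun j hj => ?_
  rw [Matrix.updateRow_ne (σ.injective.ne (Finset.ne_of_mem_erase hj))]

theorem map_det_eq_zero (A : Matrix n n S)
    (h : ∀ r, (∀ j, D (A r j) = 0) ∨ ∃ k ≠ r, ∀ j, D (A r j) = A k j) : D A.det = 0 := by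
  rw [map_det]
  refine Finset.sum_eq_zero fun r _ => ?_
  rcases h r with hzero | ⟨k, hkr, hk⟩
  · exact Matrix.det_eq_zero_of_row_eq_zero r fun j => by simp [hzero]
  · refine Matrix.det_zero_of_row_eq hkr.symm ?_
    ext j
    simp [Matrix.updateRow_ne hkr, hk]

end Det

end Derivation

theorem MvPolynomial.pderiv_ne_zero_of_mem_vars {R σ : Type*} [CommSemiring R] [NoZeroDivisors R]
    [CharZero R] {p : MvPolynomial σ R} {i : σ} (h : i ∈ p.vars) : pderiv i p ≠ 0 := by
  classical
  obtain ⟨d, hd, hid⟩ := (mem_vars_iff_mem_support i).1 h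
  have hdi : Finsupp.single i 1 ≤ d :=
    Finsupp.single_le_iff.2 (Nat.one_le_iff_ne_zero.2 (Finsupp.mem_support_iff.1 hid))
  intro h0
  have := coeff_pderiv (i := i) p (d - Finsupp.single i 1)
  rw [h0, coeff_zero, tsub_add_cancel_of_le hdi] at this
  exact mul_ne_zero (mem_support_iff.1 hd) (Nat.cast_add_one_ne_zero _) this.symm

theorem Fin.val_le_of_strictMono {l : ℕ} {f : Fin l → ℕ} (hf : StrictMono f) (i : Fin l) :
    (i : ℕ) ≤ f i := by
  obtain ⟨i, hi⟩ := i
  induction i with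
  | zero => exact Nat.zero_le _
  | succ i ih =>
    exact (ih (Nat.lt_of_succ_lt hi)).trans_lt (hf (Fin.mk_lt_mk.2 (Nat.lt_succ_self i)))

theorem pZ_of_neg {k : ℤ} (hk : k < 0) : pZ k = 0 := if_pos hk

theorem pZ_natCast (N : ℕ) : pZ N = pElem N := by
  simp [pZ]

theorem smul_pZ_eq_sum {k : ℤ} {M : ℕ} (hk : k < M) :
    (k : ℚ) • pZ k = ∑ j ∈ Finset.range M, (j : ℚ) • (X j * pZ (k - j)) := by
  rcases lt_or_ge k 0 with hneg | hnonneg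
  · rw [pZ_of_neg hneg, smul_zero]
    exact (Finset.sum_eq_zero fun j _ => by rw [pZ_of_neg (by omega), mul_zero, smul_zero]).symm
  lift k to ℕ using hnonneg
  have hM : k + 1 ≤ M := by omega
  rw [← Finset.sum_subset (Finset.range_subset_range.2 hM)
    fun j _ hj => by rw [pZ_of_neg (by rw [Finset.mem_range] at hj; omega), mul_zero, smul_zero]]
  rw [Finset.sum_range_succ', Nat.cast_zero, zero_smul, add_zero]
  rcases k with _ | K
  · simp
  rw [pZ_natCast, pElem, smul_smul, Int.cast_natCast, Nat.cast_succ,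
    mul_inv_cancel₀ (by positivity), one_smul]
  refine Finset.sum_congr rfl fun i hi => ?_
  have : ((K + 1 : ℕ) : ℤ) - ((i + 1 : ℕ) : ℤ) = ((K - i : ℕ) : ℤ) := by
    rw [Finset.mem_range] at hi; omega
  rw [this, pZ_natCast]
  push_cast
  rfl

theorem pderiv_zero_pElem (N : ℕ) : pderiv 0 (pElem N) = 0 := by
  induction N using Nat.strong_induction_on with
  | _ N ih =>
    rcases N with _ | K
    · simp [pElem]
    rw [pElem, Derivation.map_smul, map_sum]
    refine smul_eq_zero_of_right _ (Finset.sum_eq_zero fun i hi => ?_)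
    rw [Derivation.map_smul, pderiv_mul, pderiv_X_of_ne (Nat.succ_ne_zero i),
      ih _ (by rw [Finset.mem_range] at hi; omega)]
    simp

theorem pderiv_zero_pZ (k : ℤ) : pderiv 0 (pZ k) = 0 := by
  unfold pZ
  split_ifs
  · exact map_zero _
  · exact pderiv_zero_pElem _

theorem pderiv_pZ {m : ℕ} (hm : m ≠ 0) (k : ℤ) : pderiv m (pZ k) = pZ (k - m) := by
  induction h : k.toNat using Nat.strong_induction_on generalizing k with
  | _ N ih =>
    rcases lt_or_ge k 0 with hneg | hnonneg
    · rw [pZ_of_neg hneg, pZ_of_neg (by omega), map_zero]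
    lift k to ℕ using hnonneg
    simp only [Int.toNat_natCast] at h
    subst h
    rcases k.eq_zero_or_pos with rfl | hpos
    · rw [pZ_of_neg (show ((0 : ℕ) : ℤ) - m < 0 by omega)]
      simp [pZ, pElem]
    have hterm : ∀ j ∈ Finset.range (k + 1), pderiv m ((j : ℚ) • (X j * pZ (k - j))) =
        (j : ℚ) • ((if j = m then 1 else 0) * pZ (k - j)) + (j : ℚ) • (X j * pZ (k - m - j)) := by
      intro j _
      rcases j.eq_zero_or_pos with rfl | hj
      · simp
      rw [Derivation.map_smul, pderiv_mul, pderiv_X, Pi.single_apply, ih _ (by omega) _ rfl,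
        smul_add, sub_right_comm]
    have hsingle : ∑ j ∈ Finset.range (k + 1), (j : ℚ) • ((if j = m then 1 else 0) * pZ (k - j))
        = (m : ℚ) • pZ (k - m) := by
      simp only [ite_mul, one_mul, zero_mul, smul_ite, smul_zero, Finset.sum_ite_eq']
      split_ifs with hmk
      · rfl
      · rw [pZ_of_neg (by rw [Finset.mem_range] at hmk; omega), smul_zero]
    -- In the recurrence for `k p_k`, the `T_m` term contributes `m p_{k-m}` and the remaining
    -- terms reassemble into the recurrence for `(k - m) p_{k-m}`.
    refine smul_right_injective _ (Nat.cast_ne_zero.2 hpos.ne' : ((k : ℤ) : ℚ) ≠ 0) ?_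
    calc ((k : ℤ) : ℚ) • pderiv m (pZ k)
        = pderiv m (∑ j ∈ Finset.range (k + 1), (j : ℚ) • (X j * pZ (k - j))) := by
          rw [← Derivation.map_smul, smul_pZ_eq_sum (M := k + 1) (by push_cast; omega)]
      _ = (m : ℚ) • pZ (k - m) + ((k - m : ℤ) : ℚ) • pZ (k - m) := by
          rw [map_sum, Finset.sum_congr rfl hterm, Finset.sum_add_distrib, hsingle,
            smul_pZ_eq_sum (M := k + 1) (by push_cast; omega)]
      _ = ((k : ℤ) : ℚ) • pZ (k - m) := by
          rw [← add_smul]; push_cast; ring_nf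

theorem pderiv_zero_schur (l : ℕ) (lam : Fin l → ℕ) : pderiv 0 (schur l lam) = 0 :=
  Derivation.map_det_eq_zero _ _ fun _ => Or.inl fun _ => pderiv_zero_pZ _

theorem pderiv_schur_eq_zero {l m : ℕ} (lam : Fin l → ℕ) (hm : m ≠ 0)
    (h : ∀ r : Fin l, lam r + (l - 1 - r) < m ∨
      ∃ k : Fin l, lam k + (l - 1 - k) + m = lam r + (l - 1 - r)) :
    pderiv m (schur l lam) = 0 := by
  refine Derivation.map_det_eq_zero _ _ fun r => ?_
  simp only [Matrix.of_apply, pderiv_pZ hm]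
  rcases h r with hlt | ⟨k, hk⟩
  · exact Or.inl fun j => pZ_of_neg (by omega)
  · refine Or.inr ⟨k, ?_, fun j => congrArg pZ (by omega)⟩
    rintro rfl
    omega

theorem Representable.add {n s a b : ℕ} (ha : Representable n s a) (hb : Representable n s b) :
    Representable n s (a + b) := by
  obtain ⟨i, j, rfl⟩ := ha
  obtain ⟨i', j', rfl⟩ := hb
  exact ⟨i + i', j + j', by ring⟩

theorem not_representable_sub {n s a b : ℕ} (ha : ¬ Representable n s a)
    (hb : Representable n s b) (hba : b ≤ a) : ¬ Representable n s (a - b) :=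
  fun h => ha (Nat.sub_add_cancel hba ▸ h.add hb)

theorem schur_lambda_ns_vars_are_gaps_general (n s g : ℕ)
    (w : Fin g → ℕ) (hw : StrictMono w)
    (hwr : Set.range w = {k : ℕ | ¬ Representable n s k}) :
    ∀ m : ℕ,
      m ∈ (schur g (fun i : Fin g => w i.rev - (g - 1 - (i : ℕ)))).vars →
      ∃ i : Fin g, w i = m := by
  have hgap (k : ℕ) : k ∈ Set.range w ↔ ¬ Representable n s k := Set.ext_iff.1 hwr k
  intro m hm
  by_contra hm_gap
  have hm_rep : Representable n s m := not_not.1 fun h => hm_gap ((hgap m).2 h)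
  refine pderiv_ne_zero_of_mem_vars hm ?_
  rcases eq_or_ne m 0 with rfl | hm0
  · exact pderiv_zero_schur _ _
  have hβ (i : Fin g) : w i.rev - (g - 1 - i) + (g - 1 - i) = w i.rev :=
    Nat.sub_add_cancel <| by
      have := Fin.val_le_of_strictMono hw i.rev
      rw [Fin.val_rev] at this
      omega
  refine pderiv_schur_eq_zero _ hm0 fun r => ?_
  simp only [hβ]
  rcases lt_or_ge (w r.rev) m with hlt | hle
  · exact Or.inl hlt
  obtain ⟨k, hk⟩ := (hgap _).2 (not_representable_sub ((hgap _).1 ⟨r.rev, rfl⟩) hm_rep hle)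
  exact Or.inr ⟨k.rev, by rw [Fin.rev_rev, hk]; omega⟩

theorem schur_lambda_ns_vars_are_gaps (n s g : ℕ) (hn : 2 ≤ n) (hns : n < s)
    (hcop : Nat.Coprime n s) (hg : 2 * g = (n - 1) * (s - 1))
    (w : Fin g → ℕ) (hw : StrictMono w)
    (hwr : Set.range w = {k : ℕ | ¬ Representable n s k}) :
    ∀ m : ℕ,
      m ∈ (schur g (fun i : Fin g => w i.rev - (g - 1 - (i : ℕ)))).vars →
      ∃ i : Fin g, w i = m :=
  schur_lambda_ns_vars_are_gaps_general n s g w hw hwr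
end

section
/- Let n and s be coprime integers with 2 ≤ n < s. Let Λ = {(i,j) ∈ ℕ² : 0 ≤ j ≤ n-1 and n·i + s·j < n·s}, and let R = ℚ[λ_{ij} : (i,j) ∈ Λ] be the polynomial ring graded by assigning the variable λ_{ij} weight ns - ni - sj. Then there exists a unique formal power series u = ∑_{k≥0} c_k t^k ∈ R[[t]] with constant term c_0 = 1 satisfying u^n = 1 + ∑_{(i,j)∈Λ} λ_{ij} · t^{ns-ni-sj} · u^j, and moreover each coefficient c_k ∈ R is weighted homogeneous of weight k. (Equivalently: setting x = t^{-n} and y = t^{-s}·u gives the unique branch of the curve y^n = x^s + ∑_{(i,j)∈Λ} λ_{ij} x^i y^j at infinity of the form y = t^{-s}(1 + O(t)), and its Taylor coefficients c_k lie in ℚ[{λ_{ij}}] and are homogeneous of degree k.) -/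
/-!
Put `F u = 1 + ∑ λᵢⱼ t ^ (ns - ni - sj) u ^ j`. Every exponent `ns - ni - sj` is positive, so `F`
raises the `t`-adic order of differences: `u ≡ v mod t ^ k` implies `F u ≡ F v mod t ^ (k + 1)`.
For series with constant term `1`, the `k`-th coefficient of `u ^ n - v ^ n` is then `n` times
that of `u - v`, so the step `u ↦ u + n⁻¹ (F u - u ^ n)` raises the order of differences as well.
Its unique fixed point, the coefficientwise limit of its iterates, is the unique solution of
`u ^ n = F u`. The step preserves the subalgebra of series whose `k`-th coefficient is weighted
homogeneous of weight `k`, because `λᵢⱼ` has the weight of the power of `t` it multiplies; the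
`k`-th coefficient of the solution is that of the `(k + 1)`-st iterate, so it is homogeneous.
-/

open MvPolynomial PowerSeries Function Set

namespace PowerSeries

variable {R : Type*} [CommRing R]

theorem coeff_eq_of_X_pow_dvd_sub {u v : R⟦X⟧} {k i : ℕ} (h : (X : R⟦X⟧) ^ k ∣ u - v)
    (hi : i < k) : coeff i u = coeff i v := by
  simpa only [map_sub, sub_eq_zero] using X_pow_dvd_iff.mp h i hi

theorem coeff_mul_of_X_pow_dvd {f : R⟦X⟧} {k : ℕ} (hf : (X : R⟦X⟧) ^ k ∣ f) (g : R⟦X⟧) :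
    coeff k (g * f) = constantCoeff g * coeff k f := by
  obtain ⟨d, rfl⟩ := hf
  rw [mul_left_comm, coeff_X_pow_mul', if_pos le_rfl, coeff_X_pow_mul', if_pos le_rfl,
    Nat.sub_self, coeff_zero_eq_constantCoeff_apply, coeff_zero_eq_constantCoeff_apply, map_mul]

theorem coeff_pow_sub_pow_of_X_pow_dvd {u v : R⟦X⟧} {k : ℕ} (h : (X : R⟦X⟧) ^ k ∣ u - v)
    (hc : constantCoeff u = constantCoeff v) (m : ℕ) :
    coeff k (u ^ m - v ^ m) = m * constantCoeff u ^ (m - 1) * coeff k (u - v) := by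
  rw [← geom_sum₂_mul, coeff_mul_of_X_pow_dvd h, map_sum]
  congr 1
  rw [Finset.sum_eq_card_nsmul (b := constantCoeff u ^ (m - 1)), Finset.card_range, nsmul_eq_mul]
  intro i hi
  rw [map_mul, map_pow, map_pow, ← hc, ← pow_add,
    Nat.add_sub_cancel' (Nat.le_sub_one_of_lt (Finset.mem_range.mp hi))]

def ContractsOn (S : Set R⟦X⟧) (T : R⟦X⟧ → R⟦X⟧) : Prop :=
  ∀ k, ∀ u ∈ S, ∀ v ∈ S, (X : R⟦X⟧) ^ k ∣ u - v → X ^ (k + 1) ∣ T u - T v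

namespace ContractsOn

variable {S : Set R⟦X⟧} {T : R⟦X⟧ → R⟦X⟧}

theorem X_pow_dvd_iterate_sub (hT : ContractsOn S T) (hmaps : MapsTo T S S) {u v : R⟦X⟧}
    (hu : u ∈ S) (hv : v ∈ S) (k : ℕ) : (X : R⟦X⟧) ^ k ∣ T^[k] u - T^[k] v := by
  induction k with
  | zero => simp
  | succ k ih =>
    rw [iterate_succ_apply', iterate_succ_apply']
    exact hT k _ (hmaps.iterate k hu) _ (hmaps.iterate k hv) ih

theorem coeff_eq_coeff_iterate (hT : ContractsOn S T) (hmaps : MapsTo T S S) {u v : R⟦X⟧}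
    (hu : u ∈ S) (hfix : IsFixedPt T u) (hv : v ∈ S) (k : ℕ) :
    coeff k u = coeff k (T^[k + 1] v) := by
  conv_lhs => rw [← (hfix.iterate (k + 1)).eq]
  exact coeff_eq_of_X_pow_dvd_sub (hT.X_pow_dvd_iterate_sub hmaps hu hv (k + 1)) k.lt_succ_self

theorem eq_of_isFixedPt (hT : ContractsOn S T) (hmaps : MapsTo T S S) {u v : R⟦X⟧}
    (hu : u ∈ S) (hfu : IsFixedPt T u) (hv : v ∈ S) (hfv : IsFixedPt T v) : u = v := by
  ext k
  rw [hT.coeff_eq_coeff_iterate hmaps hu hfu hv, (hfv.iterate _).eq]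

theorem exists_isFixedPt {a : R} (hT : ContractsOn (constantCoeff ⁻¹' {a}) T)
    (hmaps : MapsTo T (constantCoeff ⁻¹' {a}) (constantCoeff ⁻¹' {a})) :
    ∃ u, constantCoeff u = a ∧ IsFixedPt T u := by
  have hC : C a ∈ constantCoeff ⁻¹' {a} := constantCoeff_C a
  -- the `k`-th coefficient of the iterates stabilises from the `(k + 1)`-st iterate on
  set u : R⟦X⟧ := mk fun k => coeff k (T^[k + 1] (C a))
  have hu : ∀ k, (X : R⟦X⟧) ^ k ∣ u - T^[k] (C a) := fun k => X_pow_dvd_iff.mpr fun i hi => by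
    rw [map_sub, coeff_mk, sub_eq_zero, ← Nat.add_sub_of_le hi, iterate_add_apply T (i + 1)]
    exact coeff_eq_of_X_pow_dvd_sub
      (hT.X_pow_dvd_iterate_sub hmaps hC (hmaps.iterate _ hC) (i + 1)) i.lt_succ_self
  have hu₀ : constantCoeff u = a := by
    rw [← coeff_zero_eq_constantCoeff_apply, coeff_mk, coeff_zero_eq_constantCoeff_apply]
    exact hmaps.iterate 1 hC
  refine ⟨u, hu₀, ?_⟩
  ext k
  rw [coeff_eq_of_X_pow_dvd_sub (hT k u hu₀ _ (hmaps.iterate k hC) (hu k)) k.lt_succ_self,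
    ← iterate_succ_apply' T, coeff_mk]

end ContractsOn

section NthRoot

variable [Algebra ℚ R]

noncomputable def nthRootStep (n : ℕ) (F : R⟦X⟧ → R⟦X⟧) (u : R⟦X⟧) : R⟦X⟧ :=
  u + (n : ℚ)⁻¹ • (F u - u ^ n)

variable {n : ℕ} {F : R⟦X⟧ → R⟦X⟧}

theorem isFixedPt_nthRootStep_iff (hn : n ≠ 0) {u : R⟦X⟧} :
    IsFixedPt (nthRootStep n F) u ↔ u ^ n = F u := by
  rw [IsFixedPt, nthRootStep, add_eq_left, smul_eq_zero, _root_.inv_eq_zero, Nat.cast_eq_zero,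
    or_iff_right hn, sub_eq_zero, eq_comm]

theorem mapsTo_nthRootStep (hF : MapsTo F (constantCoeff ⁻¹' {1}) (constantCoeff ⁻¹' {1})) :
    MapsTo (nthRootStep n F) (constantCoeff ⁻¹' {1}) (constantCoeff ⁻¹' {1}) := by
  intro u (hu : constantCoeff u = 1)
  have hFu : constantCoeff (F u) = 1 := hF hu
  simp [nthRootStep, hu, hFu]

theorem contractsOn_nthRootStep (hn : n ≠ 0) (hF : ContractsOn (constantCoeff ⁻¹' {1}) F) :
    ContractsOn (constantCoeff ⁻¹' {1}) (nthRootStep n F) := by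
  intro k u (hu : constantCoeff u = 1) v (hv : constantCoeff v = 1) huv
  refine X_pow_dvd_iff.mpr fun i hi => ?_
  have hpow : coeff i (u ^ n - v ^ n) = n * coeff i (u - v) := by
    rw [coeff_pow_sub_pow_of_X_pow_dvd ((pow_dvd_pow X (Nat.le_of_lt_succ hi)).trans huv)
      (hu.trans hv.symm), hu, one_pow, mul_one]
  have hF' : coeff i (F u - F v) = 0 := X_pow_dvd_iff.mp (hF k u hu v hv huv) i hi
  have hstep : nthRootStep n F u - nthRootStep n F v
      = (u - v) + (n : ℚ)⁻¹ • ((F u - F v) - (u ^ n - v ^ n)) := by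
    simp only [nthRootStep, smul_sub]
    abel
  rw [hstep, map_add, coeff_smul, map_sub (coeff i) (F u - F v), hF', hpow, zero_sub, smul_neg,
    ← nsmul_eq_mul, ← Nat.cast_smul_eq_nsmul ℚ, smul_smul, inv_mul_cancel₀ (by exact_mod_cast hn),
    one_smul, add_neg_cancel]

theorem existsUnique_pow_eq (hn : n ≠ 0)
    (hFmaps : MapsTo F (constantCoeff ⁻¹' {1}) (constantCoeff ⁻¹' {1}))
    (hF : ContractsOn (constantCoeff ⁻¹' {1}) F) :
    ∃! u : R⟦X⟧, constantCoeff u = 1 ∧ u ^ n = F u := by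
  obtain ⟨u, hu, hfix⟩ :=
    (contractsOn_nthRootStep hn hF).exists_isFixedPt (mapsTo_nthRootStep hFmaps)
  refine ⟨u, ⟨hu, (isFixedPt_nthRootStep_iff hn).mp hfix⟩, fun v ⟨hv, hvF⟩ => ?_⟩
  exact (contractsOn_nthRootStep hn hF).eq_of_isFixedPt (mapsTo_nthRootStep hFmaps) hv
    ((isFixedPt_nthRootStep_iff hn).mpr hvF) hu hfix

theorem coeff_eq_coeff_iterate_nthRootStep_of_pow_eq (hn : n ≠ 0)
    (hFmaps : MapsTo F (constantCoeff ⁻¹' {1}) (constantCoeff ⁻¹' {1}))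
    (hF : ContractsOn (constantCoeff ⁻¹' {1}) F) {u : R⟦X⟧} (hu : constantCoeff u = 1)
    (huF : u ^ n = F u) (k : ℕ) : coeff k u = coeff k ((nthRootStep n F)^[k + 1] 1) :=
  (contractsOn_nthRootStep hn hF).coeff_eq_coeff_iterate (mapsTo_nthRootStep hFmaps) hu
    ((isFixedPt_nthRootStep_iff hn).mpr huF) (map_one _) k

end NthRoot

section BranchEquation

variable {ι : Type*} {Λ : Finset ι} {a : ι → R} {e m : ι → ℕ}

noncomputable def branchEquationRHS (Λ : Finset ι) (a : ι → R) (e m : ι → ℕ) (u : R⟦X⟧) :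
    R⟦X⟧ :=
  1 + ∑ i ∈ Λ, PowerSeries.C (a i) * X ^ e i * u ^ m i

theorem mapsTo_branchEquationRHS (he : ∀ i ∈ Λ, e i ≠ 0) (S : Set R⟦X⟧) :
    MapsTo (branchEquationRHS Λ a e m) S (constantCoeff ⁻¹' {1}) := fun u _ => by
  rw [mem_preimage, branchEquationRHS, map_add, map_one, map_sum, mem_singleton_iff,
    add_eq_left]
  refine Finset.sum_eq_zero fun i hi => ?_
  rw [map_mul, map_mul, map_pow, constantCoeff_X, zero_pow (he i hi), mul_zero, zero_mul]

theorem contractsOn_branchEquationRHS (he : ∀ i ∈ Λ, e i ≠ 0) (S : Set R⟦X⟧) :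
    ContractsOn S (branchEquationRHS Λ a e m) := by
  intro k u _ v _ huv
  have hdiff : branchEquationRHS Λ a e m u - branchEquationRHS Λ a e m v
      = ∑ i ∈ Λ, X ^ e i * (PowerSeries.C (a i) * (u ^ m i - v ^ m i)) := by
    simp only [branchEquationRHS, add_sub_add_left_eq_sub, ← Finset.sum_sub_distrib]
    exact Finset.sum_congr rfl fun i _ => by ring
  rw [hdiff, pow_succ']
  exact Finset.dvd_sum fun i hi => mul_dvd_mul (dvd_pow_self X (he i hi))
    ((huv.trans (sub_dvd_pow_sub_pow _ _ _)).mul_left _)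

end BranchEquation

section WeightedHomogeneous

variable (R) {σ : Type*} (w : σ → ℕ)

def weightedHomogeneousCoeffs : Subalgebra R (MvPolynomial σ R)⟦X⟧ where
  carrier := {f | ∀ k, IsWeightedHomogeneous w (coeff k f) k}
  mul_mem' {f g} hf hg k := by
    rw [coeff_mul]
    exact IsWeightedHomogeneous.sum _ _ _ fun p hp =>
      Finset.HasAntidiagonal.mem_antidiagonal.mp hp ▸ (hf p.1).mul (hg p.2)
  add_mem' hf hg k := by
    rw [map_add]
    exact (hf k).add (hg k)
  algebraMap_mem' r k := by
    rw [algebraMap_apply, coeff_C]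
    split_ifs with hk
    · exact hk ▸ isWeightedHomogeneous_C w _
    · exact isWeightedHomogeneous_zero R w k

variable {R w}

theorem C_mul_X_pow_mem_weightedHomogeneousCoeffs {φ : MvPolynomial σ R} {d : ℕ}
    (hφ : IsWeightedHomogeneous w φ d) :
    PowerSeries.C φ * X ^ d ∈ weightedHomogeneousCoeffs R w := fun k => by
  rw [coeff_C_mul_X_pow]
  split_ifs with hk
  · exact hk ▸ hφ
  · exact isWeightedHomogeneous_zero R w k

theorem mapsTo_branchEquationRHS_weightedHomogeneousCoeffs {ι : Type*} {Λ : Finset ι}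
    {a : ι → MvPolynomial σ R} {e m : ι → ℕ}
    (ha : ∀ i ∈ Λ, IsWeightedHomogeneous w (a i) (e i)) :
    MapsTo (branchEquationRHS Λ a e m) (weightedHomogeneousCoeffs R w)
      (weightedHomogeneousCoeffs R w) := fun _ hu =>
  add_mem (one_mem _) (sum_mem fun i hi =>
    mul_mem (C_mul_X_pow_mem_weightedHomogeneousCoeffs (ha i hi)) (pow_mem hu _))

theorem mapsTo_nthRootStep_weightedHomogeneousCoeffs [Algebra ℚ R] {n : ℕ}
    {F : (MvPolynomial σ R)⟦X⟧ → (MvPolynomial σ R)⟦X⟧}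
    (hF : MapsTo F (weightedHomogeneousCoeffs R w) (weightedHomogeneousCoeffs R w)) :
    MapsTo (nthRootStep n F) (weightedHomogeneousCoeffs R w) (weightedHomogeneousCoeffs R w) :=
  fun u hu => by
    refine add_mem hu ?_
    rw [Algebra.smul_def, IsScalarTower.algebraMap_apply ℚ R]
    exact mul_mem (Subalgebra.algebraMap_mem _ _) (sub_mem (hF hu) (pow_mem hu n))

end WeightedHomogeneous

end PowerSeries

theorem branch_at_infinity_exists_unique_homogeneous_general (n s : ℕ) (hn : 2 ≤ n) :
    (∃! u : PowerSeries (MvPolynomial (ℕ × ℕ) ℚ),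
        PowerSeries.coeff (R := MvPolynomial (ℕ × ℕ) ℚ) 0 u = 1 ∧
        u ^ n = 1 + ∑ p ∈ (Finset.range s ×ˢ Finset.range n).filter
            (fun p => n * p.1 + s * p.2 < n * s),
          PowerSeries.C (R := MvPolynomial (ℕ × ℕ) ℚ) (MvPolynomial.X p) *
            (PowerSeries.X : PowerSeries (MvPolynomial (ℕ × ℕ) ℚ)) ^
              (n * s - n * p.1 - s * p.2) * u ^ p.2) ∧
    (∀ u : PowerSeries (MvPolynomial (ℕ × ℕ) ℚ),
        PowerSeries.coeff (R := MvPolynomial (ℕ × ℕ) ℚ) 0 u = 1 →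
        u ^ n = 1 + ∑ p ∈ (Finset.range s ×ˢ Finset.range n).filter
            (fun p => n * p.1 + s * p.2 < n * s),
          PowerSeries.C (R := MvPolynomial (ℕ × ℕ) ℚ) (MvPolynomial.X p) *
            (PowerSeries.X : PowerSeries (MvPolynomial (ℕ × ℕ) ℚ)) ^
              (n * s - n * p.1 - s * p.2) * u ^ p.2 →
        ∀ k : ℕ,
          MvPolynomial.IsWeightedHomogeneous
            (fun p : ℕ × ℕ => n * s - n * p.1 - s * p.2)
            (PowerSeries.coeff (R := MvPolynomial (ℕ × ℕ) ℚ) k u) k) := by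
  have hw : ∀ p ∈ (Finset.range s ×ˢ Finset.range n).filter
      (fun p => n * p.1 + s * p.2 < n * s), n * s - n * p.1 - s * p.2 ≠ 0 := fun p hp => by
    have := (Finset.mem_filter.mp hp).2
    omega
  have hn₀ : n ≠ 0 := by omega
  have hFmaps := mapsTo_branchEquationRHS (a := MvPolynomial.X (R := ℚ)) (m := Prod.snd) hw
    (PowerSeries.constantCoeff ⁻¹' {1})
  have hF := contractsOn_branchEquationRHS (a := MvPolynomial.X (R := ℚ)) (m := Prod.snd) hw
    (PowerSeries.constantCoeff ⁻¹' {1})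
  refine ⟨?_, fun u hu₀ hu k => ?_⟩
  · simpa only [coeff_zero_eq_constantCoeff_apply, branchEquationRHS] using
      existsUnique_pow_eq hn₀ hFmaps hF
  · rw [coeff_eq_coeff_iterate_nthRootStep_of_pow_eq hn₀ hFmaps hF
      ((coeff_zero_eq_constantCoeff_apply u).symm.trans hu₀) hu]
    exact (mapsTo_nthRootStep_weightedHomogeneousCoeffs
      (mapsTo_branchEquationRHS_weightedHomogeneousCoeffs fun p _ =>
        isWeightedHomogeneous_X ℚ _ p)).iterate _ (one_mem _) k

theorem branch_at_infinity_exists_unique_homogeneous (n s : ℕ) (hn : 2 ≤ n)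
    (hns : n < s) (hcop : Nat.Coprime n s) :
    (∃! u : PowerSeries (MvPolynomial (ℕ × ℕ) ℚ),
        PowerSeries.coeff (R := MvPolynomial (ℕ × ℕ) ℚ) 0 u = 1 ∧
        u ^ n = 1 + ∑ p ∈ (Finset.range s ×ˢ Finset.range n).filter
            (fun p => n * p.1 + s * p.2 < n * s),
          PowerSeries.C (R := MvPolynomial (ℕ × ℕ) ℚ) (MvPolynomial.X p) *
            (PowerSeries.X : PowerSeries (MvPolynomial (ℕ × ℕ) ℚ)) ^
              (n * s - n * p.1 - s * p.2) * u ^ p.2) ∧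
    (∀ u : PowerSeries (MvPolynomial (ℕ × ℕ) ℚ),
        PowerSeries.coeff (R := MvPolynomial (ℕ × ℕ) ℚ) 0 u = 1 →
        u ^ n = 1 + ∑ p ∈ (Finset.range s ×ˢ Finset.range n).filter
            (fun p => n * p.1 + s * p.2 < n * s),
          PowerSeries.C (R := MvPolynomial (ℕ × ℕ) ℚ) (MvPolynomial.X p) *
            (PowerSeries.X : PowerSeries (MvPolynomial (ℕ × ℕ) ℚ)) ^
              (n * s - n * p.1 - s * p.2) * u ^ p.2 →
        ∀ k : ℕ,
          MvPolynomial.IsWeightedHomogeneous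
            (fun p : ℕ × ℕ => n * s - n * p.1 - s * p.2)
            (PowerSeries.coeff (R := MvPolynomial (ℕ × ℕ) ℚ) k u) k) :=
  branch_at_infinity_exists_unique_homogeneous_general n s hn
end
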